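/- Let a : ℕ → ℝ be a bounded sequence and B_n = (1/n) ∑_{i=0}^{n-1} a_i its Birkhoff averages. Then the set of cluster points (limits of convergent subsequences) of the sequence (B_n) is exactly the closed interval [liminf_n B_n, limsup_n B_n]. -/

import Mathlib

open Filter Topology

/-- Birkhoff averages: `birk a n = (1/n) * ∑_{i=0}^{n-1} a i` (junk value `0` at `n = 0`). -/
noncomputable def birk (a : ℕ → ℝ) (n : ℕ) : ℝ := (∑ i ∈ Finset.range n, a i) / n

/-! The averages move by `birk a (n + 1) - birk a n = (a n - birk a n) / (n + 1) = O(1/n)`, so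
they cannot jump over an interval: every point strictly between `liminf` and `limsup` is
approached each time the averages cross it, and the endpoints are cluster points of any
bounded sequence. -/

theorem setOf_exists_strictMono_tendsto_eq_setOf_mapClusterPt {X : Type*} [TopologicalSpace X]
    [FirstCountableTopology X] (u : ℕ → X) :
    {x | ∃ φ : ℕ → ℕ, StrictMono φ ∧ Tendsto (fun i => u (φ i)) atTop (𝓝 x)} =
      {x | MapClusterPt x atTop u} := by
  ext x
  constructor
  · rintro ⟨φ, hφ, hx⟩
    exact hx.mapClusterPt.of_comp hφ.tendsto_atTop
  · exact MapClusterPt.tendsto_subseq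

theorem exists_mem_Icc_abs_sub_lt {u : ℕ → ℝ} {x ε : ℝ} (hε : 0 < ε) {n m : ℕ} (hnm : n ≤ m)
    (hstep : ∀ k ∈ Set.Ico n m, |u (k + 1) - u k| < ε) (hn : u n ≤ x) (hm : x ≤ u m) :
    ∃ k ∈ Set.Icc n m, |u k - x| < ε := by
  induction m, hnm using Nat.le_induction with
  | base => exact ⟨n, ⟨le_rfl, le_rfl⟩, by rwa [le_antisymm hn hm, sub_self, abs_zero]⟩
  | succ m hnm ih =>
    by_cases hxm : x ≤ u m
    · obtain ⟨k, ⟨hnk, hkm⟩, hk⟩ :=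
        ih (fun k hk => hstep k ⟨hk.1, hk.2.trans (Nat.lt_succ_self m)⟩) hxm
      exact ⟨k, ⟨hnk, hkm.trans (Nat.le_succ m)⟩, hk⟩
    · have hjump := (abs_lt.1 (hstep m ⟨hnm, Nat.lt_succ_self m⟩)).2
      refine ⟨m + 1, ⟨hnm.trans (Nat.le_succ m), le_rfl⟩, abs_lt.2 ⟨?_, ?_⟩⟩ <;> linarith

theorem mapClusterPt_of_frequently_le_of_frequently_ge {u : ℕ → ℝ} {x : ℝ}
    (hstep : Tendsto (fun n => u (n + 1) - u n) atTop (𝓝 0))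
    (hle : ∃ᶠ n in atTop, u n ≤ x) (hge : ∃ᶠ n in atTop, x ≤ u n) :
    MapClusterPt x atTop u := by
  rw [Metric.nhds_basis_ball.mapClusterPt_iff_frequently]
  intro ε hε
  rw [frequently_atTop]
  intro N
  obtain ⟨N₀, hN₀⟩ := Metric.tendsto_atTop.1 hstep ε hε
  obtain ⟨n, hn, hun⟩ := frequently_atTop.1 hle (max N N₀)
  obtain ⟨m, hm, hum⟩ := frequently_atTop.1 hge n
  have hsteps : ∀ k ∈ Set.Ico n m, |u (k + 1) - u k| < ε := fun k hk => by
    simpa only [Real.dist_eq, sub_zero] using hN₀ k ((le_max_right N N₀).trans (hn.trans hk.1))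
  obtain ⟨k, ⟨hnk, -⟩, hk⟩ := exists_mem_Icc_abs_sub_lt hε hm hsteps hun hum
  exact ⟨k, (le_max_left N N₀).trans (hn.trans hnk), by rwa [Metric.mem_ball, Real.dist_eq]⟩

theorem setOf_mapClusterPt_eq_Icc_of_tendsto_succ_sub {u : ℕ → ℝ}
    (hstep : Tendsto (fun n => u (n + 1) - u n) atTop (𝓝 0))
    (hbelow : IsBoundedUnder (· ≥ ·) atTop u) (habove : IsBoundedUnder (· ≤ ·) atTop u) :
    {x | MapClusterPt x atTop u} = Set.Icc (liminf u atTop) (limsup u atTop) := by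
  have hcob_le : IsCoboundedUnder (· ≤ ·) atTop u := hbelow.isCoboundedUnder_flip
  have hcob_ge : IsCoboundedUnder (· ≥ ·) atTop u := habove.isCoboundedUnder_flip
  ext x
  refine ⟨fun hx => ⟨hx.liminf_le hbelow, hx.le_limsup habove⟩, fun ⟨hlx, hxl⟩ => ?_⟩
  rcases hlx.eq_or_lt with rfl | hlx
  · exact MapClusterPt.liminf hcob_ge hbelow
  rcases hxl.eq_or_lt with rfl | hxl
  · exact MapClusterPt.limsup hcob_le habove
  exact mapClusterPt_of_frequently_le_of_frequently_ge hstep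
    ((frequently_lt_of_liminf_lt hcob_ge hlx).mono fun _ => le_of_lt)
    ((frequently_lt_of_lt_limsup hcob_le hxl).mono fun _ => le_of_lt)

section Birkhoff

variable {a : ℕ → ℝ} {C : ℝ}

theorem abs_birk_le (h : ∀ n, |a n| ≤ C) (n : ℕ) : |birk a n| ≤ C := by
  rcases Nat.eq_zero_or_pos n with rfl | hn
  · simpa [birk] using (abs_nonneg (a 0)).trans (h 0)
  have hn' : (0 : ℝ) < n := Nat.cast_pos.2 hn
  rw [birk, abs_div, Nat.abs_cast, div_le_iff₀ hn']
  calc |∑ i ∈ Finset.range n, a i| ≤ ∑ i ∈ Finset.range n, |a i| :=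
        Finset.abs_sum_le_sum_abs _ _
    _ ≤ ∑ _i ∈ Finset.range n, C := Finset.sum_le_sum fun i _ => h i
    _ = C * n := by rw [Finset.sum_const, Finset.card_range, nsmul_eq_mul, mul_comm]

theorem birk_succ_sub (a : ℕ → ℝ) (n : ℕ) :
    birk a (n + 1) - birk a n = (a n - birk a n) / (n + 1) := by
  rcases Nat.eq_zero_or_pos n with rfl | hn
  · simp [birk]
  have hn' : (n : ℝ) ≠ 0 := Nat.cast_ne_zero.2 hn.ne'
  simp only [birk, Finset.sum_range_succ, Nat.cast_succ]
  field_simp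
  ring

theorem tendsto_birk_succ_sub (h : ∀ n, |a n| ≤ C) :
    Tendsto (fun n => birk a (n + 1) - birk a n) atTop (𝓝 0) := by
  have hbound : ∀ n : ℕ, ‖birk a (n + 1) - birk a n‖ ≤ 2 * C * (1 / ((n : ℝ) + 1)) := by
    intro n
    have hdiff : |a n - birk a n| ≤ 2 * C :=
      (abs_sub (a n) (birk a n)).trans (by linarith [h n, abs_birk_le h n])
    have hpos : (0 : ℝ) < n + 1 := Nat.cast_add_one_pos n
    rw [birk_succ_sub, Real.norm_eq_abs, abs_div, abs_of_pos hpos, mul_one_div]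
    exact div_le_div_of_nonneg_right hdiff hpos.le
  have hlim : Tendsto (fun n : ℕ => 2 * C * (1 / ((n : ℝ) + 1))) atTop (𝓝 0) := by
    simpa using tendsto_one_div_add_atTop_nhds_zero_nat.const_mul (2 * C)
  exact squeeze_zero_norm hbound hlim

end Birkhoff

/-- For a bounded sequence `a`, the set of cluster points (limits of convergent
subsequences) of the Birkhoff averages `B_n = (1/n) ∑_{i=0}^{n-1} a i` is exactly
the closed interval `[liminf B_n, limsup B_n]`. -/
theorem clusterSet_birkhoff_eq_Icc (a : ℕ → ℝ)
    (hbdd : ∃ C : ℝ, ∀ n, |a n| ≤ C) :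
    {x : ℝ | ∃ φ : ℕ → ℕ, StrictMono φ ∧
        Tendsto (fun i => birk a (φ i)) atTop (𝓝 x)} =
      Set.Icc (liminf (birk a) atTop) (limsup (birk a) atTop) := by
  obtain ⟨C, hC⟩ := hbdd
  have hbelow : IsBoundedUnder (· ≥ ·) atTop (birk a) :=
    isBoundedUnder_of ⟨-C, fun n => (abs_le.1 (abs_birk_le hC n)).1⟩
  have habove : IsBoundedUnder (· ≤ ·) atTop (birk a) :=
    isBoundedUnder_of ⟨C, fun n => (abs_le.1 (abs_birk_le hC n)).2⟩
  rw [setOf_exists_strictMono_tendsto_eq_setOf_mapClusterPt]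
  exact setOf_mapClusterPt_eq_Icc_of_tendsto_succ_sub (tendsto_birk_succ_sub hC) hbelow habove
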